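/- arXiv:2302.10208 — 4 statements merged into one kernel-verified Lean document; each statement's English description precedes it below -/
import Mathlib

section
/- For every β > 0, the characteristic polynomial of the 3×3 matrix N (with N₀₀ = N₁₁ = (1+β)/(4β+2), N₂₂ = 2β/(4β+2), N₀₂ = N₂₀ = N₁₂ = N₂₁ = β/(4β+2), N₀₁ = N₁₀ = 1/(4β+2)) has roots exactly β/(4β+2) and (2+3β ± √(4−4β+9β²))/(2(4β+2)). -/
open Matrix Polynomial

section SwapSymmetric

variable {R : Type*} [CommRing R]

/-- `(1, -1, 0)` is an eigenvector for `a - b`; on the invariant plane spanned by `(1, 1, 0)` and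
`(0, 0, 1)` the matrix acts as `!![a + b, e; 2 * e, d]`. -/
theorem eval_charpoly_swapSymmetric (a b e d x : R) :
    (!![a, b, e; b, a, e; e, e, d] : Matrix (Fin 3) (Fin 3) R).charpoly.eval x =
      (x - (a - b)) * (x ^ 2 - (a + b + d) * x + ((a + b) * d - 2 * e ^ 2)) := by
  rw [eval_charpoly, det_fin_three]
  simp only [scalar_apply, Matrix.sub_apply, diagonal_apply_eq, diagonal_apply_ne, of_apply,
    cons_val', cons_val_zero, cons_val_one, cons_val, cons_val_fin_one, ne_eq, Fin.reduceEq,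
    not_false_eq_true, zero_ne_one, one_ne_zero]
  ring

theorem isRoot_charpoly_swapSymmetric_iff [NoZeroDivisors R] {a b e d l₀ l₁ l₂ : R}
    (h₀ : l₀ = a - b) (hsum : l₁ + l₂ = a + b + d) (hprod : l₁ * l₂ = (a + b) * d - 2 * e ^ 2)
    (x : R) :
    (!![a, b, e; b, a, e; e, e, d] : Matrix (Fin 3) (Fin 3) R).charpoly.IsRoot x ↔
      x = l₀ ∨ x = l₁ ∨ x = l₂ := by
  have hfactor : x ^ 2 - (a + b + d) * x + ((a + b) * d - 2 * e ^ 2) = (x - l₁) * (x - l₂) := by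
    rw [← hsum, ← hprod]
    ring
  rw [IsRoot, eval_charpoly_swapSymmetric, ← h₀, hfactor]
  simp only [mul_eq_zero, sub_eq_zero]

end SwapSymmetric

theorem stmt_8_general (β : ℝ) :
    ∀ x : ℝ,
      (Matrix.charpoly
        (!![(1 + β) / (4 * β + 2), 1 / (4 * β + 2), β / (4 * β + 2);
            1 / (4 * β + 2), (1 + β) / (4 * β + 2), β / (4 * β + 2);
            β / (4 * β + 2), β / (4 * β + 2), 2 * β / (4 * β + 2)] :
          Matrix (Fin 3) (Fin 3) ℝ)).IsRoot x ↔
      x = β / (4 * β + 2) ∨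
      x = (2 + 3 * β + Real.sqrt (4 - 4 * β + 9 * β ^ 2)) / (2 * (4 * β + 2)) ∨
      x = (2 + 3 * β - Real.sqrt (4 - 4 * β + 9 * β ^ 2)) / (2 * (4 * β + 2)) := by
  have hsq : Real.sqrt (4 - 4 * β + 9 * β ^ 2) ^ 2 = 4 - 4 * β + 9 * β ^ 2 :=
    Real.sq_sqrt (by nlinarith [sq_nonneg (3 * β - 2 / 3)])
  -- splitting `(2 * (4 * β + 2))⁻¹` lets `ring` treat `(4 * β + 2)⁻¹` as a single atom
  simp only [div_eq_mul_inv, mul_inv]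
  exact isRoot_charpoly_swapSymmetric_iff (by ring) (by ring)
    (by linear_combination (-(4 * β + 2)⁻¹ ^ 2 / 4) * hsq)

theorem stmt_8 (β : ℝ) (hβ : 0 < β) :
    ∀ x : ℝ,
      (Matrix.charpoly
        (!![(1 + β) / (4 * β + 2), 1 / (4 * β + 2), β / (4 * β + 2);
            1 / (4 * β + 2), (1 + β) / (4 * β + 2), β / (4 * β + 2);
            β / (4 * β + 2), β / (4 * β + 2), 2 * β / (4 * β + 2)] :
          Matrix (Fin 3) (Fin 3) ℝ)).IsRoot x ↔
      x = β / (4 * β + 2) ∨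
      x = (2 + 3 * β + Real.sqrt (4 - 4 * β + 9 * β ^ 2)) / (2 * (4 * β + 2)) ∨
      x = (2 + 3 * β - Real.sqrt (4 - 4 * β + 9 * β ^ 2)) / (2 * (4 * β + 2)) :=
  stmt_8_general β
end

section
/- For every real α with 1 < α < 2, there exists B > 0 such that for all β > B, (p₁(β))^α + (p₂(β))^α + (p₃(β))^α > (q₁(β))^α + (q₂(β))^α + (q₃(β))^α, where p₁ = (1+β)/(4β+2), p₂,₃ = (1+3β ± √(1−2β+9β²))/(2(4β+2)), q₁ = β/(4β+2), q₂,₃ = (2+3β ± √(4−4β+9β²))/(2(4β+2)). -/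
open Filter Topology Real


lemma const_div_atTop (b : ℝ) : Tendsto (fun β : ℝ => b / β) atTop (𝓝 0) := by
  simpa [div_eq_mul_inv] using tendsto_inv_atTop_zero.const_mul b

lemma divβ (β : ℝ) (hβ : β ≠ 0) (x y : ℝ) : (x / β) / (y / β) = x / y := by
  rcases eq_or_ne y 0 with h | h
  · simp [h]
  · field_simp

lemma linfrac (a b c d : ℝ) (hc : c ≠ 0) :
    Tendsto (fun β : ℝ => (a * β + b) / (c * β + d)) atTop (𝓝 (a / c)) := by
  have h1 : Tendsto (fun β : ℝ => (a + b / β) / (c + d / β)) atTop (𝓝 (a / c)) := by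
    have hn : Tendsto (fun β : ℝ => a + b / β) atTop (𝓝 a) := by
      simpa using tendsto_const_nhds.add (const_div_atTop b)
    have hd : Tendsto (fun β : ℝ => c + d / β) atTop (𝓝 c) := by
      simpa using tendsto_const_nhds.add (const_div_atTop d)
    exact hn.div hd hc
  apply h1.congr'
  filter_upwards [eventually_gt_atTop 0] with β hβ
  have e1 : a + b / β = (a * β + b) / β := by field_simp
  have e2 : c + d / β = (c * β + d) / β := by field_simp
  rw [e1, e2, divβ β hβ.ne']

lemma sqrtlim (e f : ℝ) :
    Tendsto (fun β : ℝ => Real.sqrt (9 * β ^ 2 + e * β + f) / β) atTop (𝓝 3) := by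
  have h9 : Tendsto (fun β : ℝ => 9 + e / β + f / β ^ 2) atTop (𝓝 9) := by
    have h1 : Tendsto (fun β : ℝ => f / β ^ 2) atTop (𝓝 0) := by
      have : Tendsto (fun β : ℝ => β ^ 2) atTop atTop :=
        tendsto_pow_atTop (by norm_num)
      simpa [div_eq_mul_inv, Function.comp] using
        (tendsto_inv_atTop_zero.comp this).const_mul f
    simpa using (tendsto_const_nhds.add (const_div_atTop e)).add h1
  have hcomp : Tendsto (fun β : ℝ => Real.sqrt (9 + e / β + f / β ^ 2)) atTop (𝓝 3) := by
    have h3 : Real.sqrt 9 = 3 := by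
      rw [show (9 : ℝ) = 3 ^ 2 by norm_num, Real.sqrt_sq (by norm_num)]
    simpa [h3, Function.comp_def] using (Real.continuous_sqrt.tendsto 9).comp h9
  apply hcomp.congr'
  filter_upwards [eventually_gt_atTop (|e| + |f| + 1)] with β hβ
  have habs : 0 ≤ |e| + |f| := by positivity
  have hβ0 : 0 < β := by nlinarith
  have hnum : 0 ≤ 9 * β ^ 2 + e * β + f := by
    have he : -|e| ≤ e := neg_abs_le e
    have hf : -|f| ≤ f := neg_abs_le f
    nlinarith [abs_nonneg e, abs_nonneg f]
  have e1 : 9 + e / β + f / β ^ 2 = (9 * β ^ 2 + e * β + f) / β ^ 2 := by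
    field_simp
  rw [e1, Real.sqrt_div hnum, Real.sqrt_sq hβ0.le]

-- concrete sqrt limits
lemma hsA : Tendsto (fun β : ℝ => Real.sqrt (1 - 2 * β + 9 * β ^ 2) / β) atTop (𝓝 3) := by
  have h := sqrtlim (-2) 1
  have e : (fun β : ℝ => Real.sqrt (9 * β ^ 2 + (-2) * β + 1) / β)
      = (fun β : ℝ => Real.sqrt (1 - 2 * β + 9 * β ^ 2) / β) := by
    funext β
    ring_nf
  rwa [e] at h

lemma hsB : Tendsto (fun β : ℝ => Real.sqrt (4 - 4 * β + 9 * β ^ 2) / β) atTop (𝓝 3) := by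
  have h := sqrtlim (-4) 4
  have e : (fun β : ℝ => Real.sqrt (9 * β ^ 2 + (-4) * β + 4) / β)
      = (fun β : ℝ => Real.sqrt (4 - 4 * β + 9 * β ^ 2) / β) := by
    funext β
    ring_nf
  rwa [e] at h

lemma hβ84 : Tendsto (fun β : ℝ => β / (8 * β + 4)) atTop (𝓝 (1/8)) := by
  have h := linfrac 1 0 8 4 (by norm_num)
  simp only [one_mul, add_zero] at h
  exact h

lemma hApos (β : ℝ) : 0 < 1 - 2 * β + 9 * β ^ 2 := by nlinarith [sq_nonneg (3 * β - 1/3)]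
lemma hBpos (β : ℝ) : 0 < 4 - 4 * β + 9 * β ^ 2 := by nlinarith [sq_nonneg (3 * β - 2/3)]

lemma L_q1 : Tendsto (fun β : ℝ => β / (4 * β + 2)) atTop (𝓝 (1/4)) := by
  have h := linfrac 1 0 4 2 (by norm_num)
  simp only [one_mul, add_zero] at h
  exact h

lemma L_d1 : Tendsto (fun β : ℝ => β * ((1 + β) / (4 * β + 2) - β / (4 * β + 2)))
    atTop (𝓝 (1/4)) := by
  apply L_q1.congr
  intro β
  rw [div_sub_div_same, show (1 + β) - β = 1 by ring, mul_one_div]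

lemma L_q2 : Tendsto (fun β : ℝ => (2 + 3 * β + Real.sqrt (4 - 4 * β + 9 * β ^ 2)) / (2 * (4 * β + 2)))
    atTop (𝓝 (3/4)) := by
  have h1 : Tendsto (fun β : ℝ => (3 * β + 2) / (8 * β + 4)) atTop (𝓝 (3/8)) := by
    have := linfrac 3 2 8 4 (by norm_num); exact this
  have h2 : Tendsto (fun β : ℝ => (Real.sqrt (4 - 4 * β + 9 * β ^ 2) / β) * (β / (8 * β + 4)))
      atTop (𝓝 (3 * (1/8))) := hsB.mul hβ84
  have h := h1.add h2
  norm_num at h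
  apply h.congr'
  filter_upwards [eventually_gt_atTop 0] with β hβ
  rw [div_mul_div_comm, mul_comm (Real.sqrt (4 - 4 * β + 9 * β ^ 2)) β,
    mul_div_mul_left _ _ hβ.ne', ← add_div,
    show (2:ℝ) * (4 * β + 2) = 8 * β + 4 by ring]
  congr 1
  ring

lemma L_d2 : Tendsto (fun β : ℝ =>
      β * ((1 + 3 * β + Real.sqrt (1 - 2 * β + 9 * β ^ 2)) / (2 * (4 * β + 2))
        - (2 + 3 * β + Real.sqrt (4 - 4 * β + 9 * β ^ 2)) / (2 * (4 * β + 2))))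
    atTop (𝓝 (-(1/12))) := by
  have hratio : Tendsto (fun β : ℝ =>
      (2 * β - 3) / (Real.sqrt (1 - 2 * β + 9 * β ^ 2) + Real.sqrt (4 - 4 * β + 9 * β ^ 2)))
      atTop (𝓝 (1/3)) := by
    have hnum : Tendsto (fun β : ℝ => (2 * β - 3) / β) atTop (𝓝 2) := by
      have h := linfrac 2 (-3) 1 0 (by norm_num)
      simp only [one_mul, add_zero] at h
      norm_num at h
      apply h.congr
      intro β
      ring_nf
    have hden : Tendsto (fun β : ℝ =>
        (Real.sqrt (1 - 2 * β + 9 * β ^ 2) + Real.sqrt (4 - 4 * β + 9 * β ^ 2)) / β)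
        atTop (𝓝 6) := by
      have := hsA.add hsB
      norm_num at this
      apply this.congr
      intro β
      rw [add_div]
    have h := hnum.div hden (by norm_num)
    norm_num at h
    apply h.congr'
    filter_upwards [eventually_gt_atTop 0] with β hβ
    simp only [Pi.div_apply]
    rw [divβ β hβ.ne']
  have h := ((tendsto_const_nhds (x := (-1:ℝ))).add hratio).mul hβ84
  have hval : ((-1 : ℝ) + 1/3) * (1/8) = -(1/12) := by norm_num
  rw [hval] at h
  apply h.congr'
  filter_upwards [eventually_gt_atTop 0] with β hβ
  have hA := hApos β
  have hB := hBpos β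
  have hsum : 0 < Real.sqrt (1 - 2 * β + 9 * β ^ 2) + Real.sqrt (4 - 4 * β + 9 * β ^ 2) := by
    have := Real.sqrt_pos.mpr hA
    have := Real.sqrt_nonneg (4 - 4 * β + 9 * β ^ 2)
    linarith
  have hAB : Real.sqrt (1 - 2 * β + 9 * β ^ 2) - Real.sqrt (4 - 4 * β + 9 * β ^ 2)
      = (2 * β - 3) / (Real.sqrt (1 - 2 * β + 9 * β ^ 2) + Real.sqrt (4 - 4 * β + 9 * β ^ 2)) := by
    rw [eq_div_iff hsum.ne']
    linear_combination Real.sq_sqrt hA.le - Real.sq_sqrt hB.le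
  rw [div_sub_div_same,
    show (1 + 3 * β + Real.sqrt (1 - 2 * β + 9 * β ^ 2))
        - (2 + 3 * β + Real.sqrt (4 - 4 * β + 9 * β ^ 2))
      = -1 + (Real.sqrt (1 - 2 * β + 9 * β ^ 2) - Real.sqrt (4 - 4 * β + 9 * β ^ 2)) by ring,
    hAB, show (2:ℝ) * (4 * β + 2) = 8 * β + 4 by ring]
  ring

lemma inv_six (cst : ℝ) (e f : ℝ)
    (hs : Tendsto (fun β : ℝ => Real.sqrt (e + f * β + 9 * β ^ 2) / β) atTop (𝓝 3)) :
    Tendsto (fun β : ℝ => β / (cst + 3 * β + Real.sqrt (e + f * β + 9 * β ^ 2)))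
      atTop (𝓝 (1/6)) := by
  have hden : Tendsto (fun β : ℝ =>
      (cst + 3 * β + Real.sqrt (e + f * β + 9 * β ^ 2)) / β) atTop (𝓝 6) := by
    have h1 : Tendsto (fun β : ℝ => (cst + 3 * β) / β) atTop (𝓝 3) := by
      have h := linfrac 3 cst 1 0 (by norm_num)
      simp only [one_mul, add_zero] at h
      norm_num at h
      apply h.congr
      intro β
      ring_nf
    have := h1.add hs
    norm_num at this
    apply this.congr
    intro β
    rw [← add_div]
  have h := (tendsto_const_nhds (x := (1:ℝ))).div hden (by norm_num)
  norm_num at h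
  apply h.congr'
  filter_upwards [eventually_gt_atTop 0] with β hβ
  simp only [Pi.div_apply]
  rw [one_div, inv_div]

lemma hsA' : Tendsto (fun β : ℝ => Real.sqrt (1 + (-2) * β + 9 * β ^ 2) / β) atTop (𝓝 3) := by
  have h := hsA
  have e : (fun β : ℝ => Real.sqrt (1 - 2 * β + 9 * β ^ 2) / β)
      = (fun β : ℝ => Real.sqrt (1 + (-2) * β + 9 * β ^ 2) / β) := by
    funext β; ring_nf
  rwa [e] at h

lemma hsB' : Tendsto (fun β : ℝ => Real.sqrt (4 + (-4) * β + 9 * β ^ 2) / β) atTop (𝓝 3) := by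
  have h := hsB
  have e : (fun β : ℝ => Real.sqrt (4 - 4 * β + 9 * β ^ 2) / β)
      = (fun β : ℝ => Real.sqrt (4 + (-4) * β + 9 * β ^ 2) / β) := by
    funext β; ring_nf
  rwa [e] at h

lemma L_p3 : Tendsto (fun β : ℝ =>
      β * ((1 + 3 * β - Real.sqrt (1 - 2 * β + 9 * β ^ 2)) / (2 * (4 * β + 2))))
    atTop (𝓝 (1/6)) := by
  have hinv := inv_six 1 1 (-2) hsA'
  have h := ((hinv.const_mul 8).mul hβ84)
  have hval : (8:ℝ) * (1/6) * (1/8) = 1/6 := by norm_num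
  rw [hval] at h
  apply h.congr'
  filter_upwards [eventually_gt_atTop 0] with β hβ
  have hA := hApos β
  have hsq : Real.sqrt (1 + (-2) * β + 9 * β ^ 2) = Real.sqrt (1 - 2 * β + 9 * β ^ 2) := by
    ring_nf
  rw [hsq]
  have hden : 0 < 1 + 3 * β + Real.sqrt (1 - 2 * β + 9 * β ^ 2) := by
    have := Real.sqrt_nonneg (1 - 2 * β + 9 * β ^ 2)
    linarith
  have hkey : 1 + 3 * β - Real.sqrt (1 - 2 * β + 9 * β ^ 2)
      = 8 * β / (1 + 3 * β + Real.sqrt (1 - 2 * β + 9 * β ^ 2)) := by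
    rw [eq_div_iff hden.ne']
    linear_combination -Real.sq_sqrt hA.le
  rw [hkey]
  have h2 : (2:ℝ) * (4 * β + 2) ≠ 0 := by positivity
  field_simp
  ring

lemma L_q3 : Tendsto (fun β : ℝ =>
      β * ((2 + 3 * β - Real.sqrt (4 - 4 * β + 9 * β ^ 2)) / (2 * (4 * β + 2))))
    atTop (𝓝 (1/3)) := by
  have hinv := inv_six 2 4 (-4) hsB'
  have h := ((hinv.const_mul 16).mul hβ84)
  have hval : (16:ℝ) * (1/6) * (1/8) = 1/3 := by norm_num
  rw [hval] at h
  apply h.congr'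
  filter_upwards [eventually_gt_atTop 0] with β hβ
  have hB := hBpos β
  have hsq : Real.sqrt (4 + (-4) * β + 9 * β ^ 2) = Real.sqrt (4 - 4 * β + 9 * β ^ 2) := by
    ring_nf
  rw [hsq]
  have hden : 0 < 2 + 3 * β + Real.sqrt (4 - 4 * β + 9 * β ^ 2) := by
    have := Real.sqrt_nonneg (4 - 4 * β + 9 * β ^ 2)
    linarith
  have hkey : 2 + 3 * β - Real.sqrt (4 - 4 * β + 9 * β ^ 2)
      = 16 * β / (2 + 3 * β + Real.sqrt (4 - 4 * β + 9 * β ^ 2)) := by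
    rw [eq_div_iff hden.ne']
    linear_combination -Real.sq_sqrt hB.le
  rw [hkey]
  have h2 : (2:ℝ) * (4 * β + 2) ≠ 0 := by positivity
  field_simp
  ring


lemma key (α : ℝ) (hα : 0 < α) (p q : ℝ → ℝ) (c L : ℝ) (hc : 0 < c) (hL : L ≠ 0)
    (hq : Tendsto q atTop (𝓝 c))
    (hd : Tendsto (fun β => β * (p β - q β)) atTop (𝓝 L)) :
    Tendsto (fun β => β * (p β ^ α - q β ^ α)) atTop (𝓝 (c ^ α * α * (L / c))) := by
  have hdiff0 : Tendsto (fun β => p β - q β) atTop (𝓝 0) := by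
    have h := hd.mul tendsto_inv_atTop_zero
    simp only [mul_zero] at h
    apply h.congr'
    filter_upwards [eventually_gt_atTop 0] with β hβ
    field_simp
  have hp : Tendsto p atTop (𝓝 c) := by
    have := hq.add hdiff0
    simpa using this.congr (fun β => by ring)
  have hqpos : ∀ᶠ β in atTop, 0 < q β := hq.eventually (lt_mem_nhds hc)
  have hppos : ∀ᶠ β in atTop, 0 < p β := hp.eventually (lt_mem_nhds hc)
  have hne : ∀ᶠ β in atTop, p β ≠ q β := by
    filter_upwards [hd.eventually_ne hL, eventually_gt_atTop 0] with β h hβ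
    intro hpq
    exact h (by rw [hpq]; ring)
  have hr : Tendsto (fun β => p β / q β) atTop (𝓝 1) := by
    have := hp.div hq hc.ne'
    rwa [div_self hc.ne'] at this
  -- slope limit
  have hderiv : HasDerivAt (fun x : ℝ => x ^ α) α 1 := by
    have := Real.hasDerivAt_rpow_const (x := 1) (p := α) (Or.inl one_ne_zero)
    simpa using this
  have hslope0 : Tendsto (slope (fun x : ℝ => x ^ α) 1) (𝓝[≠] 1) (𝓝 α) :=
    hasDerivAt_iff_tendsto_slope.mp hderiv
  have hrne : Tendsto (fun β => p β / q β) atTop (𝓝[≠] 1) := by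
    rw [tendsto_nhdsWithin_iff]
    refine ⟨hr, ?_⟩
    filter_upwards [hne, hqpos] with β h hq0
    simp only [Set.mem_compl_iff, Set.mem_singleton_iff]
    intro habs
    exact h (by field_simp at habs; linarith)
  have hslope : Tendsto (fun β => ((p β / q β) ^ α - 1) / (p β / q β - 1)) atTop (𝓝 α) := by
    have := hslope0.comp hrne
    apply this.congr
    intro β
    simp [Function.comp, slope_def_field, Real.one_rpow]
  have hu : Tendsto (fun β => β * (p β / q β - 1)) atTop (𝓝 (L / c)) := by
    have h := hd.div hq hc.ne'
    apply h.congr'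
    filter_upwards [hqpos] with β hq0
    rw [Pi.div_apply]; field_simp
  have hqα : Tendsto (fun β => q β ^ α) atTop (𝓝 (c ^ α)) :=
    hq.rpow_const (Or.inl hc.ne')
  have := (hqα.mul hslope).mul hu
  apply this.congr'
  filter_upwards [hppos, hqpos, hne] with β hp0 hq0 hpq
  have hq0' : q β ≠ 0 := hq0.ne'
  have hr1 : p β / q β - 1 ≠ 0 := by
    intro habs
    exact hpq (by field_simp at habs; linarith)
  have hqα0 : q β ^ α ≠ 0 := (Real.rpow_pos_of_pos hq0 α).ne'
  have e1 : ((p β / q β) ^ α - 1) / (p β / q β - 1) * (β * (p β / q β - 1))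
      = β * ((p β / q β) ^ α - 1) := by
    have hsub : p β - q β ≠ 0 := sub_ne_zero.mpr hpq
    field_simp
  rw [mul_assoc, e1, Real.div_rpow hp0.le hq0.le]
  field_simp


lemma cube_lim (α : ℝ) (hα : 1 < α) (p : ℝ → ℝ) (m : ℝ)
    (hp : ∀ᶠ β in atTop, 0 ≤ p β)
    (h : Tendsto (fun β => β * p β) atTop (𝓝 m)) :
    Tendsto (fun β => β * p β ^ α) atTop (𝓝 0) := by
  have ha : Tendsto (fun β => (β * p β) ^ α) atTop (𝓝 (m ^ α)) :=
    h.rpow_const (Or.inr (by linarith))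
  have hb : Tendsto (fun β : ℝ => β ^ (1 - α)) atTop (𝓝 0) := by
    have := tendsto_rpow_neg_atTop (by linarith : (0:ℝ) < α - 1)
    simpa [neg_sub] using this
  have h1 := ha.mul hb
  rw [mul_zero] at h1
  apply h1.congr'
  filter_upwards [hp, eventually_gt_atTop 0] with β h0 hβ
  rw [Real.mul_rpow hβ.le h0, mul_assoc, mul_comm (p β ^ α), ← mul_assoc,
    ← Real.rpow_add hβ]
  norm_num


theorem stmt_12 (α : ℝ) (h1 : 1 < α) (h2 : α < 2) :
    ∃ B > (0 : ℝ), ∀ β > B,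
      ((1 + β) / (4 * β + 2)) ^ α
        + ((1 + 3 * β + Real.sqrt (1 - 2 * β + 9 * β ^ 2)) / (2 * (4 * β + 2))) ^ α
        + ((1 + 3 * β - Real.sqrt (1 - 2 * β + 9 * β ^ 2)) / (2 * (4 * β + 2))) ^ α
      > (β / (4 * β + 2)) ^ α
        + ((2 + 3 * β + Real.sqrt (4 - 4 * β + 9 * β ^ 2)) / (2 * (4 * β + 2))) ^ α
        + ((2 + 3 * β - Real.sqrt (4 - 4 * β + 9 * β ^ 2)) / (2 * (4 * β + 2))) ^ α := by
  have hα0 : (0:ℝ) < α := by linarith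
  -- pair 1
  have hk1 := key α hα0 (fun β => (1 + β) / (4 * β + 2)) (fun β => β / (4 * β + 2))
    (1/4) (1/4) (by norm_num) (by norm_num) L_q1 L_d1
  -- pair 2
  have hk2 := key α hα0
    (fun β => (1 + 3 * β + Real.sqrt (1 - 2 * β + 9 * β ^ 2)) / (2 * (4 * β + 2)))
    (fun β => (2 + 3 * β + Real.sqrt (4 - 4 * β + 9 * β ^ 2)) / (2 * (4 * β + 2)))
    (3/4) (-(1/12)) (by norm_num) (by norm_num) L_q2 L_d2
  -- small eigenvalues
  have hp3nn : ∀ᶠ β : ℝ in atTop,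
      0 ≤ (1 + 3 * β - Real.sqrt (1 - 2 * β + 9 * β ^ 2)) / (2 * (4 * β + 2)) := by
    filter_upwards [L_p3.eventually (lt_mem_nhds (by norm_num : (0:ℝ) < 1/6)),
      eventually_gt_atTop 0] with β h hβ
    by_contra hcon
    push_neg at hcon
    nlinarith
  have hq3nn : ∀ᶠ β : ℝ in atTop,
      0 ≤ (2 + 3 * β - Real.sqrt (4 - 4 * β + 9 * β ^ 2)) / (2 * (4 * β + 2)) := by
    filter_upwards [L_q3.eventually (lt_mem_nhds (by norm_num : (0:ℝ) < 1/3)),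
      eventually_gt_atTop 0] with β h hβ
    by_contra hcon
    push_neg at hcon
    nlinarith
  have hc3 := cube_lim α h1
    (fun β => (1 + 3 * β - Real.sqrt (1 - 2 * β + 9 * β ^ 2)) / (2 * (4 * β + 2)))
    (1/6) hp3nn L_p3
  have hc4 := cube_lim α h1
    (fun β => (2 + 3 * β - Real.sqrt (4 - 4 * β + 9 * β ^ 2)) / (2 * (4 * β + 2)))
    (1/3) hq3nn L_q3
  -- total limit
  have htot := ((hk1.add hk2).add hc3).sub hc4
  set T : ℝ := (1/4) ^ α * α * (1/4 / (1/4)) + (3/4) ^ α * α * (-(1/12) / (3/4)) + 0 - 0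
    with hTdef
  have hT : 0 < T := by
    have h3α : (3:ℝ) ^ α < 9 := by
      have hlt : (3:ℝ) ^ α < 3 ^ (2:ℝ) :=
        Real.rpow_lt_rpow_left_iff (by norm_num : (1:ℝ) < 3) |>.mpr h2
      have : (3:ℝ) ^ (2:ℝ) = 9 := by
        rw [show (2:ℝ) = ((2:ℕ):ℝ) by norm_num, Real.rpow_natCast]
        norm_num
      linarith [hlt.trans_eq this]
    have h34 : (3/4:ℝ) ^ α = 3 ^ α * (1/4) ^ α := by
      rw [← Real.mul_rpow (by norm_num) (by norm_num)]
      norm_num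
    have hq : 0 < (1/4:ℝ) ^ α := Real.rpow_pos_of_pos (by norm_num) α
    rw [hTdef, h34]
    have hfac : 0 < α * (1/4:ℝ) ^ α * (9 - 3 ^ α) :=
      mul_pos (mul_pos hα0 hq) (by linarith)
    nlinarith [hfac]
  have hev := htot.eventually (lt_mem_nhds hT)
  have hfin : ∀ᶠ β : ℝ in atTop,
      ((1 + β) / (4 * β + 2)) ^ α
        + ((1 + 3 * β + Real.sqrt (1 - 2 * β + 9 * β ^ 2)) / (2 * (4 * β + 2))) ^ α
        + ((1 + 3 * β - Real.sqrt (1 - 2 * β + 9 * β ^ 2)) / (2 * (4 * β + 2))) ^ α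
      > (β / (4 * β + 2)) ^ α
        + ((2 + 3 * β + Real.sqrt (4 - 4 * β + 9 * β ^ 2)) / (2 * (4 * β + 2))) ^ α
        + ((2 + 3 * β - Real.sqrt (4 - 4 * β + 9 * β ^ 2)) / (2 * (4 * β + 2))) ^ α := by
    filter_upwards [hev, eventually_gt_atTop 0] with β h hβ
    set x1 := ((1 + β) / (4 * β + 2)) ^ α
    set x2 := ((1 + 3 * β + Real.sqrt (1 - 2 * β + 9 * β ^ 2)) / (2 * (4 * β + 2))) ^ α
    set x3 := ((1 + 3 * β - Real.sqrt (1 - 2 * β + 9 * β ^ 2)) / (2 * (4 * β + 2))) ^ α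
    set y1 := (β / (4 * β + 2)) ^ α
    set y2 := ((2 + 3 * β + Real.sqrt (4 - 4 * β + 9 * β ^ 2)) / (2 * (4 * β + 2))) ^ α
    set y3 := ((2 + 3 * β - Real.sqrt (4 - 4 * β + 9 * β ^ 2)) / (2 * (4 * β + 2))) ^ α
    by_contra hcon
    push_neg at hcon
    nlinarith [h, hcon, hβ]
  obtain ⟨b, hb⟩ := eventually_atTop.mp hfin
  refine ⟨max b 1, lt_of_lt_of_le one_pos (le_max_right _ _), fun β hβ => ?_⟩
  exact hb β ((le_max_left b 1).trans hβ.le)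
end

section
/- As β → ∞ with α > 1 fixed, (p₁(β))^α + (p₂(β))^α + (p₃(β))^α = (1+3^α)/4^α − (α/β)·(7·3^α − 9)/(18·4^α) + o(1/β), where p₁ = (1+β)/(4β+2) and p₂,₃ = (1+3β ± √(1−2β+9β²))/(2(4β+2)). -/
open Asymptotics Filter

theorem stmt_13 (α : ℝ) (hα : 1 < α) :
    (fun β : ℝ =>
        ((1 + β) / (4 * β + 2)) ^ α
          + ((1 + 3 * β + Real.sqrt (1 - 2 * β + 9 * β ^ 2)) / (2 * (4 * β + 2))) ^ α
          + ((1 + 3 * β - Real.sqrt (1 - 2 * β + 9 * β ^ 2)) / (2 * (4 * β + 2))) ^ α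
          - ((1 + (3 : ℝ) ^ α) / (4 : ℝ) ^ α
              - (α / β) * (7 * (3 : ℝ) ^ α - 9) / (18 * (4 : ℝ) ^ α)))
      =o[atTop] (fun β : ℝ => 1 / β) := by
  have h3pos : (0:ℝ) < 3 ^ α := Real.rpow_pos_of_pos (by norm_num) _
  have h4pos : (0:ℝ) < 4 ^ α := Real.rpow_pos_of_pos (by norm_num) _
  set D0 : ℝ := α * (9 - 7 * 3 ^ α) / (18 * 4 ^ α) with hD0
  -- sqrt value at 0
  have hs0 : Real.sqrt (9 - 2*(0:ℝ) + (0:ℝ)^2) = 3 := by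
    norm_num
  -- derivative of first term
  have d1 : HasDerivAt (fun t : ℝ => (t+1)/(4+2*t)) (1/8) 0 := by
    have h := ((hasDerivAt_id (0:ℝ)).add_const 1).div
      (((hasDerivAt_id (0:ℝ)).const_mul 2).const_add 4) (by norm_num)
    refine h.congr_deriv ?_; symm
    norm_num
  have d1r : HasDerivAt (fun t : ℝ => ((t+1)/(4+2*t)) ^ α) (α / (2 * 4 ^ α)) 0 := by
    have h := d1.rpow_const (p := α) (Or.inl (by norm_num))
    convert h using 1
    have hv : ((0:ℝ)+1)/(4+2*0) = 1/4 := by norm_num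
    rw [hv, Real.rpow_sub_one (by norm_num : (1/4:ℝ) ≠ 0),
      Real.div_rpow (by norm_num) (by norm_num), Real.one_rpow]
    field_simp
    ring
  -- derivative of sqrt part
  have dq : HasDerivAt (fun t : ℝ => 9 - 2*t + t^2) (-2) 0 := by
    have h := (((hasDerivAt_id (0:ℝ)).const_mul 2).const_sub 9).add (hasDerivAt_pow 2 (0:ℝ))
    refine h.congr_deriv ?_; symm
    norm_num
  have ds : HasDerivAt (fun t : ℝ => Real.sqrt (9 - 2*t + t^2)) (-1/3) 0 := by
    have h := dq.sqrt (by norm_num : (9 - 2*(0:ℝ) + (0:ℝ)^2) ≠ 0)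
    rw [hs0] at h
    convert h using 1
    norm_num
  -- derivative of second term
  have d2 : HasDerivAt (fun t : ℝ => (3 + t + Real.sqrt (9 - 2*t + t^2))/(8+4*t)) (-7/24) 0 := by
    have hnum : HasDerivAt (fun t : ℝ => 3 + t + Real.sqrt (9 - 2*t + t^2)) (1 + (-1/3)) 0 :=
      ((hasDerivAt_id (0:ℝ)).const_add 3).add ds
    have hden : HasDerivAt (fun t : ℝ => 8 + 4*t) 4 0 := by
      simpa using ((hasDerivAt_id (0:ℝ)).const_mul 4).const_add 8
    have h := hnum.div hden (by norm_num)
    refine h.congr_deriv ?_; symm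
    rw [hs0]
    norm_num
  have hbase2 : (3 + (0:ℝ) + Real.sqrt (9 - 2*0 + 0^2))/(8+4*0) = 3/4 := by
    rw [hs0]; norm_num
  have d2r : HasDerivAt (fun t : ℝ => ((3 + t + Real.sqrt (9 - 2*t + t^2))/(8+4*t)) ^ α)
      (-(7 * α * 3 ^ α / (18 * 4 ^ α))) 0 := by
    have h := d2.rpow_const (p := α) (Or.inl (by rw [hbase2]; norm_num))
    rw [hbase2] at h
    convert h using 1
    rw [Real.rpow_sub_one (by norm_num : (3/4:ℝ) ≠ 0),
      Real.div_rpow (by norm_num) (by norm_num)]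
    field_simp
    ring
  -- little-o for the differentiable part
  have dsum : HasDerivAt (fun t : ℝ => ((t+1)/(4+2*t)) ^ α
      + ((3 + t + Real.sqrt (9 - 2*t + t^2))/(8+4*t)) ^ α) D0 0 := by
    have h := d1r.add d2r
    refine h.congr_deriv ?_; symm
    rw [hD0]
    field_simp
    ring
  have hC : (((0:ℝ)+1)/(4+2*(0:ℝ))) ^ α + ((3 + (0:ℝ) + Real.sqrt (9 - 2*0 + 0^2))/(8+4*0)) ^ α
      = (1 + (3:ℝ) ^ α) / (4:ℝ) ^ α := by
    rw [hbase2, show ((0:ℝ)+1)/(4+2*(0:ℝ)) = 1/4 by norm_num,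
      Real.div_rpow (by norm_num) (by norm_num), Real.one_rpow,
      Real.div_rpow (by norm_num) (by norm_num)]
    field_simp
  have key1 : (fun t : ℝ => ((t+1)/(4+2*t)) ^ α
      + ((3 + t + Real.sqrt (9 - 2*t + t^2))/(8+4*t)) ^ α
      - ((1 + (3:ℝ) ^ α) / (4:ℝ) ^ α + D0 * t)) =o[nhds 0] (fun t : ℝ => t) := by
    have h := hasDerivAt_iff_isLittleO.mp dsum
    simp only [sub_zero, smul_eq_mul] at h
    refine h.congr (fun t => ?_) (fun t => rfl)
    rw [hC]
    ring
  -- little-o for the third term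
  have key2 : (fun t : ℝ => ((3 + t - Real.sqrt (9 - 2*t + t^2))/(8+4*t)) ^ α)
      =o[nhdsWithin 0 (Set.Ioi 0)] (fun t : ℝ => t) := by
    have hto : Tendsto (fun t : ℝ => t ^ (α-1)) (nhdsWithin 0 (Set.Ioi 0)) (nhds 0) := by
      have hc : ContinuousAt (fun t : ℝ => t ^ (α-1)) 0 :=
        Real.continuousAt_rpow_const 0 (α-1) (Or.inr (by linarith))
      have htt : Tendsto (fun t : ℝ => t ^ (α-1)) (nhdsWithin 0 (Set.Ioi 0))
          (nhds ((0:ℝ) ^ (α-1))) := hc.tendsto.mono_left nhdsWithin_le_nhds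
      rwa [Real.zero_rpow (by linarith : α - 1 ≠ 0)] at htt
    have h1 : (fun t : ℝ => t ^ (α-1)) =o[nhdsWithin 0 (Set.Ioi 0)] (fun _ : ℝ => (1:ℝ)) :=
      (isLittleO_one_iff ℝ).mpr hto
    have h2 : (fun t : ℝ => t ^ (α-1) * t) =o[nhdsWithin 0 (Set.Ioi 0)] (fun t : ℝ => 1 * t) :=
      h1.mul_isBigO (isBigO_refl _ _)
    have h3 : (fun t : ℝ => t ^ α) =o[nhdsWithin 0 (Set.Ioi 0)] (fun t : ℝ => t) := by
      refine h2.congr' ?_ (by filter_upwards with t using one_mul t)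
      filter_upwards [self_mem_nhdsWithin] with t (ht : (0:ℝ) < t)
      rw [← Real.rpow_add_one ht.ne' (α-1)]
      norm_num
    refine IsBigO.trans_isLittleO ?_ h3
    rw [isBigO_iff]
    refine ⟨1, ?_⟩
    have hle1 : ∀ᶠ t : ℝ in nhdsWithin 0 (Set.Ioi 0), t ≤ 1 :=
      (eventually_nhdsWithin_of_eventually_nhds (eventually_le_nhds one_pos))
    filter_upwards [self_mem_nhdsWithin, hle1] with t (ht : (0:ℝ) < t) ht1
    have hsle : Real.sqrt (9 - 2*t + t^2) ≤ 3 + t := by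
      rw [show (3:ℝ) + t = Real.sqrt ((3+t)^2) from (Real.sqrt_sq (by linarith)).symm]
      exact Real.sqrt_le_sqrt (by nlinarith)
    have hsge : 3 - t ≤ Real.sqrt (9 - 2*t + t^2) := by
      rw [show (3:ℝ) - t = Real.sqrt ((3-t)^2) from (Real.sqrt_sq (by linarith)).symm]
      exact Real.sqrt_le_sqrt (by nlinarith)
    have hden : (0:ℝ) < 8 + 4*t := by linarith
    have hp0 : 0 ≤ (3 + t - Real.sqrt (9 - 2*t + t^2))/(8+4*t) :=
      div_nonneg (by linarith) hden.le
    have hpt : (3 + t - Real.sqrt (9 - 2*t + t^2))/(8+4*t) ≤ t := by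
      rw [div_le_iff₀ hden]
      nlinarith
    have hb : ((3 + t - Real.sqrt (9 - 2*t + t^2))/(8+4*t)) ^ α ≤ t ^ α :=
      Real.rpow_le_rpow hp0 hpt (by linarith)
    rw [Real.norm_eq_abs, Real.norm_eq_abs, one_mul,
      abs_of_nonneg (Real.rpow_nonneg hp0 α), abs_of_nonneg (Real.rpow_nonneg ht.le α)]
    exact hb
  -- combine
  have total : (fun t : ℝ => ((t+1)/(4+2*t)) ^ α
      + ((3 + t + Real.sqrt (9 - 2*t + t^2))/(8+4*t)) ^ α
      + ((3 + t - Real.sqrt (9 - 2*t + t^2))/(8+4*t)) ^ α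
      - ((1 + (3:ℝ) ^ α) / (4:ℝ) ^ α + D0 * t))
      =o[nhdsWithin 0 (Set.Ioi 0)] (fun t : ℝ => t) := by
    have h := (key1.mono nhdsWithin_le_nhds).add key2
    refine h.congr (fun t => ?_) (fun t => rfl)
    ring
  have final := total.comp_tendsto (tendsto_inv_atTop_nhdsGT_zero : Tendsto (fun β : ℝ => β⁻¹) atTop _)
  refine final.congr' ?_ (by filter_upwards with β using (one_div β).symm)
  filter_upwards [eventually_ge_atTop (1:ℝ)] with β hβ
  have hβ0 : (0:ℝ) < β := lt_of_lt_of_le one_pos hβ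
  have hβne : β ≠ 0 := ne_of_gt hβ0
  have hsq : Real.sqrt (9 - 2*β⁻¹ + (β⁻¹)^2) = β⁻¹ * Real.sqrt (1 - 2*β + 9*β^2) := by
    rw [show (9 - 2*β⁻¹ + (β⁻¹)^2 : ℝ) = (β⁻¹)^2 * (1 - 2*β + 9*β^2) by
      field_simp; ring]
    rw [Real.sqrt_mul (sq_nonneg _), Real.sqrt_sq (inv_nonneg.mpr hβ0.le)]
  have hd1 : (0:ℝ) < 4 + 2*β⁻¹ := by positivity
  have hd2 : (0:ℝ) < 8 + 4*β⁻¹ := by positivity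
  have hd3 : (0:ℝ) < 4*β + 2 := by linarith
  have e1 : (β⁻¹+1)/(4+2*β⁻¹) = (1+β)/(4*β+2) := by
    rw [div_eq_div_iff hd1.ne' hd3.ne']
    field_simp
  have e2 : (3 + β⁻¹ + Real.sqrt (9 - 2*β⁻¹ + (β⁻¹)^2))/(8+4*β⁻¹)
      = (1 + 3*β + Real.sqrt (1 - 2*β + 9*β^2))/(2*(4*β+2)) := by
    rw [hsq, div_eq_div_iff hd2.ne' (by linarith : (2*(4*β+2) : ℝ) ≠ 0)]
    field_simp
    ring
  have e3 : (3 + β⁻¹ - Real.sqrt (9 - 2*β⁻¹ + (β⁻¹)^2))/(8+4*β⁻¹)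
      = (1 + 3*β - Real.sqrt (1 - 2*β + 9*β^2))/(2*(4*β+2)) := by
    rw [hsq, div_eq_div_iff hd2.ne' (by linarith : (2*(4*β+2) : ℝ) ≠ 0)]
    field_simp
    ring
  have ec : (1 + (3:ℝ) ^ α) / (4:ℝ) ^ α + D0 * β⁻¹
      = (1 + (3:ℝ) ^ α) / (4:ℝ) ^ α - (α / β) * (7 * (3:ℝ) ^ α - 9) / (18 * (4:ℝ) ^ α) := by
    rw [hD0]
    field_simp
    ring
  simp only [Function.comp]
  rw [e1, e2, e3, ec]
end

section
/- As β → ∞ with α > 1 fixed, (q₁(β))^α + (q₂(β))^α + (q₃(β))^α = (1+3^α)/4^α − (α/β)·(5·3^α + 9)/(18·4^α) + o(1/β), where q₁ = β/(4β+2) and q₂,₃ = (2+3β ± √(4−4β+9β²))/(2(4β+2)). -/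
open Asymptotics Filter Set Topology

private lemma sqrt9 : Real.sqrt 9 = 3 := by
  rw [show (9:ℝ) = 3^2 by norm_num, Real.sqrt_sq (by norm_num)]

private lemma keyD (α : ℝ) (hα : 1 < α) :
    -1/8 * α * ((1:ℝ)/4)^(α-1) + -5/24 * α * ((3:ℝ)/4)^(α-1)
      = -(α * (5 * (3:ℝ)^α + 9) / (18 * (4:ℝ)^α)) := by
  have h3 : (0:ℝ) < (3:ℝ)^α := Real.rpow_pos_of_pos (by norm_num) _
  have h4 : (0:ℝ) < (4:ℝ)^α := Real.rpow_pos_of_pos (by norm_num) _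
  rw [Real.rpow_sub_one (by norm_num), Real.rpow_sub_one (by norm_num),
    Real.div_rpow (by norm_num) (by norm_num), Real.div_rpow (by norm_num) (by norm_num),
    Real.one_rpow]
  field_simp
  ring

private lemma hasDerivG (α : ℝ) (hα : 1 < α) :
    HasDerivAt (fun t : ℝ => (1/(4+2*t))^α + ((2*t+3+Real.sqrt (9-4*t+4*t^2))/(8+4*t))^α)
      (-(α * (5 * (3:ℝ)^α + 9) / (18 * (4:ℝ)^α))) 0 := by
  have hpoly : HasDerivAt (fun t : ℝ => 9 - 4*t + 4*t^2) (-4) 0 := by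
    have h1 : HasDerivAt (fun t : ℝ => 9 - 4*t + 4*t^2) (-(4*1) + 4*(2*0^1)) 0 :=
      (((hasDerivAt_id 0).const_mul 4).const_sub 9).add ((hasDerivAt_pow 2 0).const_mul 4)
    convert h1 using 1
    norm_num
  have hs : HasDerivAt (fun t : ℝ => Real.sqrt (9-4*t+4*t^2)) (-2/3) 0 := by
    have h := hpoly.sqrt (by norm_num)
    convert h using 1
    norm_num [sqrt9]
  have hden1 : HasDerivAt (fun t : ℝ => 4+2*t) 2 0 := by
    simpa using ((hasDerivAt_id (0:ℝ)).const_mul 2).const_add 4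
  have hinv1 : HasDerivAt (fun t : ℝ => 1/(4+2*t)) (-1/8) 0 := by
    have h := (hasDerivAt_const (0:ℝ) (1:ℝ)).div hden1 (by norm_num)
    refine h.congr_deriv ?_
    norm_num
  have hA := hinv1.rpow_const (p := α) (Or.inr hα.le)
  have h21 : HasDerivAt (fun t : ℝ => 2*t+3) 2 0 := by
    simpa using ((hasDerivAt_id (0:ℝ)).const_mul 2).add_const 3
  have hnum2 : HasDerivAt (fun t : ℝ => 2*t+3+Real.sqrt (9-4*t+4*t^2)) (2 + -2/3) 0 := h21.add hs
  have hden2 : HasDerivAt (fun t : ℝ => 8+4*t) 4 0 := by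
    simpa using ((hasDerivAt_id (0:ℝ)).const_mul 4).const_add 8
  have hv := hnum2.div hden2 (by norm_num)
  have hB := hv.rpow_const (p := α) (Or.inr hα.le)
  have htot := hA.add hB
  refine htot.congr_deriv ?_
  rw [← keyD α hα]
  norm_num [sqrt9]

private lemma hCterm (α : ℝ) (hα : 1 < α) :
    Tendsto (fun t : ℝ => ((2*t+3-Real.sqrt (9-4*t+4*t^2))/(8+4*t))^α / t)
      (𝓝[>] (0:ℝ)) (𝓝 0) := by
  have h0α : 0 < α - 1 := by linarith
  have hlim : Tendsto (fun t : ℝ => t^(α-1)) (𝓝[>] (0:ℝ)) (𝓝 0) := by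
    have hc : ContinuousAt (fun t : ℝ => t^(α-1)) 0 :=
      Real.continuousAt_rpow_const 0 (α-1) (Or.inr h0α.le)
    have h := hc.tendsto
    rw [Real.zero_rpow h0α.ne'] at h
    exact h.mono_left nhdsWithin_le_nhds
  refine squeeze_zero' ?_ ?_ hlim
  · filter_upwards [self_mem_nhdsWithin] with t ht
    have ht : (0:ℝ) < t := ht
    have harg : (0:ℝ) ≤ 9-4*t+4*t^2 := by nlinarith
    have hsle : Real.sqrt (9-4*t+4*t^2) ≤ 2*t+3 := by
      rw [show 2*t+3 = Real.sqrt ((2*t+3)^2) by rw [Real.sqrt_sq (by linarith)]]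
      exact Real.sqrt_le_sqrt (by nlinarith)
    have hbase : 0 ≤ (2*t+3-Real.sqrt (9-4*t+4*t^2))/(8+4*t) :=
      div_nonneg (by linarith) (by linarith)
    exact div_nonneg (Real.rpow_nonneg hbase α) ht.le
  · filter_upwards [self_mem_nhdsWithin] with t ht
    have ht : (0:ℝ) < t := ht
    have harg : (0:ℝ) ≤ 9-4*t+4*t^2 := by nlinarith
    set s := Real.sqrt (9-4*t+4*t^2) with hsdef
    have hssq : s^2 = 9-4*t+4*t^2 := Real.sq_sqrt harg
    have hs0 : 0 ≤ s := Real.sqrt_nonneg _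
    have hsle : s ≤ 2*t+3 := by
      rw [hsdef, show 2*t+3 = Real.sqrt ((2*t+3)^2) by rw [Real.sqrt_sq (by linarith)]]
      exact Real.sqrt_le_sqrt (by nlinarith)
    have key : (2*t+3-s)*(2*t+3+s) = 16*t := by linear_combination -hssq
    have hnn : 0 ≤ 2*t+3-s := by linarith
    have h3le : (3:ℝ) ≤ 2*t+3+s := by linarith
    have hnum : 2*t+3-s ≤ 16*t/3 := by
      nlinarith [mul_le_mul_of_nonneg_left h3le hnn]
    have hw : (2*t+3-s)/(8+4*t) ≤ t := by
      rw [div_le_iff₀ (by linarith)]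
      nlinarith
    have hwn : 0 ≤ (2*t+3-s)/(8+4*t) := div_nonneg hnn (by linarith)
    have h1 : ((2*t+3-s)/(8+4*t))^α ≤ t^α := Real.rpow_le_rpow hwn hw (by linarith)
    rw [Real.rpow_sub_one ht.ne']
    gcongr

theorem stmt_14 (α : ℝ) (hα : 1 < α) :
    (fun β : ℝ =>
        (β / (4 * β + 2)) ^ α
          + ((2 + 3 * β + Real.sqrt (4 - 4 * β + 9 * β ^ 2)) / (2 * (4 * β + 2))) ^ α
          + ((2 + 3 * β - Real.sqrt (4 - 4 * β + 9 * β ^ 2)) / (2 * (4 * β + 2))) ^ α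
          - ((1 + (3 : ℝ) ^ α) / (4 : ℝ) ^ α
              - (α / β) * (5 * (3 : ℝ) ^ α + 9) / (18 * (4 : ℝ) ^ α)))
      =o[atTop] (fun β : ℝ => 1 / β) := by
  have h3 : (0:ℝ) < (3:ℝ)^α := Real.rpow_pos_of_pos (by norm_num) _
  have h4 : (0:ℝ) < (4:ℝ)^α := Real.rpow_pos_of_pos (by norm_num) _
  set C1 : ℝ := α * (5 * (3:ℝ)^α + 9) / (18 * (4:ℝ)^α) with hC1
  set C0 : ℝ := (1 + (3:ℝ)^α) / (4:ℝ)^α with hC0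
  have hG0 : (1/(4+2*(0:ℝ)))^α + ((2*0+3+Real.sqrt (9-4*0+4*(0:ℝ)^2))/(8+4*0))^α = C0 := by
    norm_num [sqrt9]
    rw [hC0, Real.div_rpow (by norm_num : (0:ℝ) ≤ 1) (by norm_num),
      Real.div_rpow (by norm_num : (0:ℝ) ≤ 3) (by norm_num), Real.one_rpow]
    ring
  have hslope : Tendsto (fun t : ℝ =>
      (((1/(4+2*t))^α + ((2*t+3+Real.sqrt (9-4*t+4*t^2))/(8+4*t))^α) - C0)/t)
      (𝓝[>] (0:ℝ)) (𝓝 (-C1)) := by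
    have h := hasDerivG α hα
    rw [hasDerivAt_iff_tendsto_slope] at h
    have h2 := h.mono_left (nhdsWithin_mono 0 (fun x hx => ne_of_gt hx))
    refine h2.congr (fun t => ?_)
    rw [slope_def_field]
    rw [hG0, sub_zero]
  have hsum : Tendsto (fun t : ℝ =>
      (((1/(4+2*t))^α + ((2*t+3+Real.sqrt (9-4*t+4*t^2))/(8+4*t))^α) - C0)/t
        + ((2*t+3-Real.sqrt (9-4*t+4*t^2))/(8+4*t))^α / t + C1)
      (𝓝[>] (0:ℝ)) (𝓝 0) := by
    have := (hslope.add (hCterm α hα)).add (tendsto_const_nhds (x := C1))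
    simpa using this
  have hinv : Tendsto (fun β : ℝ => 1/β) atTop (𝓝[>] (0:ℝ)) := by
    rw [tendsto_nhdsWithin_iff]
    constructor
    · simpa [one_div] using tendsto_inv_atTop_zero
    · filter_upwards [eventually_gt_atTop (0:ℝ)] with β hβ
      exact one_div_pos.mpr hβ
  have hcomp := hsum.comp hinv
  rw [isLittleO_iff_tendsto']
  · refine Tendsto.congr' ?_ hcomp
    filter_upwards [eventually_gt_atTop (0:ℝ)] with β hβ
    simp only [Function.comp]
    have hb4 : (0:ℝ) < 4*β+2 := by linarith
    have e2 : Real.sqrt (4-4*β+9*β^2) = β * Real.sqrt (9-4*(1/β)+4*(1/β)^2) := by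
      rw [show (4-4*β+9*β^2 : ℝ) = β^2 * (9-4*(1/β)+4*(1/β)^2) by field_simp; ring,
        Real.sqrt_mul (sq_nonneg β), Real.sqrt_sq hβ.le]
    rw [e2]
    have e1 : β/(4*β+2) = 1/(4+2*(1/β)) := by
      rw [div_eq_div_iff hb4.ne' (by positivity)]
      field_simp
    have e3 : (2+3*β+β*Real.sqrt (9-4*(1/β)+4*(1/β)^2))/(2*(4*β+2))
        = (2*(1/β)+3+Real.sqrt (9-4*(1/β)+4*(1/β)^2))/(8+4*(1/β)) := by
      rw [div_eq_div_iff (by positivity) (by positivity)]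
      field_simp
      ring
    have e4 : (2+3*β-β*Real.sqrt (9-4*(1/β)+4*(1/β)^2))/(2*(4*β+2))
        = (2*(1/β)+3-Real.sqrt (9-4*(1/β)+4*(1/β)^2))/(8+4*(1/β)) := by
      rw [div_eq_div_iff (by positivity) (by positivity)]
      field_simp
      ring
    rw [e1, e3, e4, hC1]
    set X1 := (1/(4+2*(1/β)))^α with hX1
    set X2 := ((2*(1/β)+3+Real.sqrt (9-4*(1/β)+4*(1/β)^2))/(8+4*(1/β)))^α with hX2
    set X3 := ((2*(1/β)+3-Real.sqrt (9-4*(1/β)+4*(1/β)^2))/(8+4*(1/β)))^α with hX3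
    field_simp
    ring
  · filter_upwards [eventually_gt_atTop (0:ℝ)] with β hβ h
    exact absurd h (by positivity)
end
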